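/- arXiv:1812.04295 — 3 statements merged into one kernel-verified Lean document; each statement's English description precedes it below -/
import Mathlib

section
/- Let 1 ≤ P, Q, R < ∞ and 1 ≤ p, q, r ≤ ∞ with 1/P = 1/R + 1/Q and 1/p = 1/r + 1/q. Then for all measurable functions f, g on ℝⁿ, the Lorentz quasinorms satisfy ‖f·g‖_{L^{P,p}} ≤ ‖f‖_{L^{R,r}}·‖g‖_{L^{Q,q}}. -/
open MeasureTheory Set Filter

noncomputable section

/-- Decreasing rearrangement of an `ℝ≥0∞`-valued function. -/
noncomputable def rearrE {α : Type*} [MeasurableSpace α] (μ : MeasureTheory.Measure α)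
    (u : α → ENNReal) (t : ℝ) : ENNReal :=
  sInf {s : ENNReal | μ {x | s < u x} ≤ ENNReal.ofReal t}

/-- Decreasing rearrangement of a real-valued function (with `inf ∅ = ∞`). -/
noncomputable def rearr {α : Type*} [MeasurableSpace α] (μ : MeasureTheory.Measure α)
    (u : α → ℝ) (t : ℝ) : ENNReal :=
  rearrE μ (fun x => ENNReal.ofReal |u x|) t
/-- The Lorentz quasinorm `‖u‖_{L^{P,p}}` with first exponent `P : ℝ` and second
exponent `p : ℝ≥0∞` (the case `p = ∞` being the weak-type norm, with `1/∞ = 0`). -/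
noncomputable def lorentzNorm {α : Type*} [MeasurableSpace α] (μ : MeasureTheory.Measure α)
    (P : ℝ) (p : ENNReal) (u : α → ℝ) : ENNReal :=
  if p = ⊤ then ⨆ t ∈ Set.Ioi (0:ℝ), ENNReal.ofReal (t ^ (1/P)) * rearr μ u t
  else (∫⁻ t in Set.Ioi (0:ℝ),
      (ENNReal.ofReal (t ^ (1/P - 1/p.toReal)) * rearr μ u t) ^ p.toReal) ^ (1/p.toReal)

/-!
Since `(fg)*(t) ≤ f*(t/2) g*(t/2)`, splitting the weight as
`t^(1/P - 1/p) = 2^(1/P - 1/p) (t/2)^(1/R - 1/r) (t/2)^(1/Q - 1/q)` bounds the profile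
`t^(1/P - 1/p) (fg)*(t)` of `fg` by `2^(1/P - 1/p)` times the product of the profiles of `f` and
`g` at `t/2`. Hölder's inequality in `L^p(0, ∞)` with `1/p = 1/r + 1/q` and the dilation `t ↦ t/2`,
which costs `2^(1/r)` and `2^(1/q)`, give the bound with constant `2^(1/P)`.
-/

open scoped ENNReal

section Rearrangement

variable {α : Type*} [MeasurableSpace α] {μ : Measure α}

theorem measure_lt_rearrE_le (u : α → ℝ≥0∞) (t : ℝ) :
    μ {x | rearrE μ u t < u x} ≤ ENNReal.ofReal t := by
  set A := {s : ℝ≥0∞ | μ {x | s < u x} ≤ ENNReal.ofReal t}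
  have hA : A.Nonempty := ⟨⊤, by simp [A]⟩
  obtain ⟨s, hs_anti, hs_lim, hsA⟩ := exists_seq_tendsto_sInf hA (OrderBot.bddBelow A)
  have hunion : {x | sInf A < u x} = ⋃ n, {x | s n < u x} := by
    ext x
    simp only [mem_ofPred_eq, mem_iUnion]
    refine ⟨fun hx => (hs_lim.eventually (gt_mem_nhds hx)).exists, ?_⟩
    rintro ⟨n, hn⟩
    exact (sInf_le (hsA n)).trans_lt hn
  have hmono : Monotone fun n => {x | s n < u x} :=
    fun m n hmn x hx => (hs_anti hmn).trans_lt hx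
  calc μ {x | rearrE μ u t < u x} = ⨆ n, μ {x | s n < u x} := by
        rw [rearrE, hunion, hmono.measure_iUnion]
    _ ≤ ENNReal.ofReal t := iSup_le hsA

theorem rearrE_mul_add_le (u v : α → ℝ≥0∞) {s t : ℝ} (hs : 0 ≤ s) (ht : 0 ≤ t) :
    rearrE μ (fun x => u x * v x) (s + t) ≤ rearrE μ u s * rearrE μ v t := by
  refine sInf_le ?_
  calc μ {x | rearrE μ u s * rearrE μ v t < u x * v x}
      ≤ μ ({x | rearrE μ u s < u x} ∪ {x | rearrE μ v t < v x}) := by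
        refine measure_mono fun x hx => ?_
        by_contra h
        simp only [mem_union, mem_ofPred_eq, not_or, not_lt] at h
        exact (mul_le_mul' h.1 h.2).not_gt hx
    _ ≤ ENNReal.ofReal s + ENNReal.ofReal t :=
        (measure_union_le _ _).trans
          (add_le_add (measure_lt_rearrE_le u s) (measure_lt_rearrE_le v t))
    _ = ENNReal.ofReal (s + t) := (ENNReal.ofReal_add hs ht).symm

theorem rearr_mul_le (f g : α → ℝ) {t : ℝ} (ht : 0 ≤ t) :
    rearr μ (fun x => f x * g x) t ≤ rearr μ f (t / 2) * rearr μ g (t / 2) := by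
  have hfg : (fun x => ENNReal.ofReal |f x * g x|) =
      fun x => ENNReal.ofReal |f x| * ENNReal.ofReal |g x| := by
    simp only [abs_mul, ENNReal.ofReal_mul (abs_nonneg _)]
  have h := rearrE_mul_add_le (μ := μ) (fun x => ENNReal.ofReal |f x|)
    (fun x => ENNReal.ofReal |g x|) (s := t / 2) (t := t / 2) (by positivity) (by positivity)
  rwa [add_halves, ← hfg] at h

theorem rearr_antitone (f : α → ℝ) : Antitone (rearr μ f) :=
  fun _ _ hst => sInf_le_sInf fun _ ha => ha.trans (ENNReal.ofReal_le_ofReal hst)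

end Rearrangement

theorem setLIntegral_Ioi_comp_div (H : ℝ → ℝ≥0∞) {a : ℝ} (ha : 0 < a) :
    ∫⁻ t in Ioi 0, H (t / a) = ENNReal.ofReal a * ∫⁻ t in Ioi 0, H t := by
  have hemb : MeasurableEmbedding (a⁻¹ * ·) := measurableEmbedding_mulLeft₀ (inv_ne_zero ha.ne')
  have hpre : (a⁻¹ * ·) ⁻¹' Ioi (0:ℝ) = Ioi 0 := by
    rw [preimage_const_mul_Ioi₀ _ (inv_pos.mpr ha), zero_div]
  simp_rw [div_eq_inv_mul]
  rw [← hpre, ← hemb.lintegral_map, ← Measure.restrict_map hemb.measurable measurableSet_Ioi,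
    Real.map_volume_mul_left (inv_ne_zero ha.ne'), Measure.restrict_smul, lintegral_smul_measure,
    inv_inv, abs_of_pos ha, smul_eq_mul, hpre]

theorem ENNReal.one_div_toReal_eq_add {p q r : ℝ≥0∞} (hpqr : p⁻¹ = r⁻¹ + q⁻¹) (hr : r ≠ 0)
    (hq : q ≠ 0) : 1 / p.toReal = 1 / r.toReal + 1 / q.toReal := by
  simp only [one_div, ← ENNReal.toReal_inv, hpqr,
    ENNReal.toReal_add (ENNReal.inv_ne_top.mpr hr) (ENNReal.inv_ne_top.mpr hq)]

theorem ENNReal.ne_zero_of_inv_eq_add {p q r : ℝ≥0∞} (hpqr : p⁻¹ = r⁻¹ + q⁻¹) (hr : r ≠ 0)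
    (hq : q ≠ 0) : p ≠ 0 := by
  rintro rfl
  exact ENNReal.add_ne_top.mpr ⟨ENNReal.inv_ne_top.mpr hr, ENNReal.inv_ne_top.mpr hq⟩
    (hpqr.symm.trans ENNReal.inv_zero)

section SetLpNorm

variable {β : Type*} [MeasurableSpace β]

/-- For `p = ∞` this is the supremum over `s`, not the essential supremum, as in `lorentzNorm`. -/
def setLpNorm (ν : Measure β) (s : Set β) (p : ℝ≥0∞) (F : β → ℝ≥0∞) : ℝ≥0∞ :=
  if p = ⊤ then ⨆ t ∈ s, F t else (∫⁻ t in s, F t ^ p.toReal ∂ν) ^ (1 / p.toReal)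

variable {ν : Measure β} {s : Set β} {p q r : ℝ≥0∞} {F G : β → ℝ≥0∞}

theorem setLpNorm_top (F : β → ℝ≥0∞) : setLpNorm ν s ⊤ F = ⨆ t ∈ s, F t := if_pos rfl

theorem setLpNorm_of_ne_top (hp : p ≠ ⊤) (F : β → ℝ≥0∞) :
    setLpNorm ν s p F = (∫⁻ t in s, F t ^ p.toReal ∂ν) ^ (1 / p.toReal) := if_neg hp

theorem setLpNorm_mono (hs : MeasurableSet s) (h : ∀ t ∈ s, F t ≤ G t) :
    setLpNorm ν s p F ≤ setLpNorm ν s p G := by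
  unfold setLpNorm
  split_ifs
  · exact iSup₂_mono h
  · refine ENNReal.rpow_le_rpow (setLIntegral_mono' hs fun t ht => ?_) (by positivity)
    exact ENNReal.rpow_le_rpow (h t ht) ENNReal.toReal_nonneg

theorem setLpNorm_const_mul (hp : p ≠ 0) (c : ℝ≥0∞) (hF : AEMeasurable F (ν.restrict s)) :
    setLpNorm ν s p (fun t => c * F t) = c * setLpNorm ν s p F := by
  unfold setLpNorm
  split_ifs with hp_top
  · simp only [ENNReal.mul_iSup]
  · have hp_pos : 0 < p.toReal := ENNReal.toReal_pos hp hp_top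
    simp_rw [ENNReal.mul_rpow_of_nonneg _ _ hp_pos.le]
    rw [lintegral_const_mul'' _ (hF.pow_const _), ENNReal.mul_rpow_of_nonneg _ _ (by positivity),
      ← ENNReal.rpow_mul, mul_one_div_cancel hp_pos.ne', ENNReal.rpow_one]

theorem setLpNorm_mul_le_iSup_mul (hs : MeasurableSet s) (hp : p ≠ 0)
    (hG : AEMeasurable G (ν.restrict s)) :
    setLpNorm ν s p (F * G) ≤ (⨆ t ∈ s, F t) * setLpNorm ν s p G :=
  (setLpNorm_mono hs fun t ht => mul_le_mul_left (le_iSup₂ (f := fun t _ => F t) t ht) (G t)).trans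
    (setLpNorm_const_mul hp _ hG).le

theorem setLpNorm_mul_le (hs : MeasurableSet s) (hpqr : p⁻¹ = r⁻¹ + q⁻¹) (hr : r ≠ 0)
    (hq : q ≠ 0) (hF : AEMeasurable F (ν.restrict s)) (hG : AEMeasurable G (ν.restrict s)) :
    setLpNorm ν s p (F * G) ≤ setLpNorm ν s r F * setLpNorm ν s q G := by
  have hp := ENNReal.ne_zero_of_inv_eq_add hpqr hr hq
  rcases eq_or_ne r ⊤ with rfl | hr_top
  · obtain rfl : p = q := by simpa using hpqr
    rw [setLpNorm_top]
    exact setLpNorm_mul_le_iSup_mul hs hp hG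
  rcases eq_or_ne q ⊤ with rfl | hq_top
  · obtain rfl : p = r := by simpa using hpqr
    rw [mul_comm F, mul_comm (setLpNorm ν s p F), setLpNorm_top]
    exact setLpNorm_mul_le_iSup_mul hs hp hF
  have hp_top : p ≠ ⊤ := by
    rintro rfl
    exact ENNReal.inv_ne_zero.mpr hr_top (add_eq_zero.mp (hpqr.symm.trans ENNReal.inv_top)).1
  have hreal := ENNReal.one_div_toReal_eq_add hpqr hr hq
  have hp_pos : 0 < p.toReal := ENNReal.toReal_pos hp hp_top
  have hpr : p.toReal < r.toReal := by
    refine lt_of_one_div_lt_one_div (ENNReal.toReal_pos hr hr_top) ?_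
    have : 0 < 1 / q.toReal := one_div_pos.mpr (ENNReal.toReal_pos hq hq_top)
    linarith
  rw [setLpNorm_of_ne_top hp_top, setLpNorm_of_ne_top hr_top, setLpNorm_of_ne_top hq_top]
  exact ENNReal.lintegral_Lp_mul_le_Lq_mul_Lr hp_pos hpr hreal _ hF hG

end SetLpNorm

theorem setLpNorm_Ioi_comp_div (p : ℝ≥0∞) (F : ℝ → ℝ≥0∞) {a : ℝ} (ha : 0 < a) :
    setLpNorm volume (Ioi 0) p (fun t => F (t / a)) =
      ENNReal.ofReal a ^ (1 / p.toReal) * setLpNorm volume (Ioi 0) p F := by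
  unfold setLpNorm
  split_ifs with hp
  · rw [hp, ENNReal.toReal_top, div_zero, ENNReal.rpow_zero, one_mul]
    refine le_antisymm (iSup₂_le fun t ht => le_iSup₂_of_le (t / a) (div_pos ht ha) le_rfl)
      (iSup₂_le fun t ht => le_iSup₂_of_le (t * a) (mul_pos ht ha) ?_)
    simp only [mul_div_cancel_right₀ t ha.ne', le_rfl]
  · rw [setLIntegral_Ioi_comp_div (fun t => F t ^ p.toReal) ha,
      ENNReal.mul_rpow_of_nonneg _ _ (by positivity)]

section Lorentz

variable {α : Type*} [MeasurableSpace α] {μ : Measure α} {P Q R : ℝ} {p q r : ℝ≥0∞}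

def lorentzProfile (μ : Measure α) (P : ℝ) (p : ℝ≥0∞) (u : α → ℝ) (t : ℝ) : ℝ≥0∞ :=
  ENNReal.ofReal (t ^ (1 / P - 1 / p.toReal)) * rearr μ u t

theorem lorentzNorm_eq_setLpNorm (u : α → ℝ) :
    lorentzNorm μ P p u = setLpNorm volume (Ioi 0) p (lorentzProfile μ P p u) := by
  unfold lorentzNorm setLpNorm lorentzProfile
  split_ifs with hp
  · simp only [hp, ENNReal.toReal_top, div_zero, sub_zero]
  · rfl

theorem measurable_lorentzProfile (u : α → ℝ) : Measurable (lorentzProfile μ P p u) :=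
  (measurable_id.pow_const _).ennreal_ofReal.mul (rearr_antitone u).measurable

theorem lorentzProfile_mul_le (hPQR : 1 / P = 1 / R + 1 / Q)
    (hpqr : 1 / p.toReal = 1 / r.toReal + 1 / q.toReal) (f g : α → ℝ) {t : ℝ} (ht : 0 < t) :
    lorentzProfile μ P p (fun x => f x * g x) t ≤
      2 ^ (1 / P - 1 / p.toReal) *
        (lorentzProfile μ R r f (t / 2) * lorentzProfile μ Q q g (t / 2)) := by
  have hweight : ENNReal.ofReal (t ^ (1 / P - 1 / p.toReal)) =
      2 ^ (1 / P - 1 / p.toReal) * (ENNReal.ofReal ((t / 2) ^ (1 / R - 1 / r.toReal)) *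
        ENNReal.ofReal ((t / 2) ^ (1 / Q - 1 / q.toReal))) := by
    have hexp : 1 / R - 1 / r.toReal + (1 / Q - 1 / q.toReal) = 1 / P - 1 / p.toReal := by
      rw [hPQR, hpqr]
      ring
    rw [← ENNReal.ofReal_mul (by positivity), ← Real.rpow_add (by positivity),
      ← ENNReal.ofReal_ofNat 2, ENNReal.ofReal_rpow_of_pos two_pos,
      ← ENNReal.ofReal_mul (by positivity), hexp, ← Real.mul_rpow zero_le_two (by positivity), mul_div_cancel₀ t two_ne_zero]
  calc lorentzProfile μ P p (fun x => f x * g x) t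
      ≤ ENNReal.ofReal (t ^ (1 / P - 1 / p.toReal)) * (rearr μ f (t / 2) * rearr μ g (t / 2)) := by
        unfold lorentzProfile
        gcongr
        exact rearr_mul_le f g ht.le
    _ = _ := by
        rw [hweight, lorentzProfile, lorentzProfile]
        ring

theorem lorentzNorm_mul_le (hPQR : 1 / P = 1 / R + 1 / Q) (hpqr : p⁻¹ = r⁻¹ + q⁻¹) (hr : r ≠ 0)
    (hq : q ≠ 0) (f g : α → ℝ) :
    lorentzNorm μ P p (fun x => f x * g x) ≤
      2 ^ (1 / P) * lorentzNorm μ R r f * lorentzNorm μ Q q g := by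
  have hreal := ENNReal.one_div_toReal_eq_add hpqr hr hq
  set F := fun t => lorentzProfile μ R r f (t / 2)
  set G := fun t => lorentzProfile μ Q q g (t / 2)
  have hF : Measurable F := (measurable_lorentzProfile f).comp (measurable_id.div_const 2)
  have hG : Measurable G := (measurable_lorentzProfile g).comp (measurable_id.div_const 2)
  have hconst : (2 : ℝ≥0∞) ^ (1 / P) =
      2 ^ (1 / P - 1 / p.toReal) * 2 ^ (1 / r.toReal) * 2 ^ (1 / q.toReal) := by
    rw [← ENNReal.rpow_add _ _ two_ne_zero ENNReal.ofNat_ne_top,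
      ← ENNReal.rpow_add _ _ two_ne_zero ENNReal.ofNat_ne_top, hreal]
    ring_nf
  simp only [lorentzNorm_eq_setLpNorm]
  calc setLpNorm volume (Ioi 0) p (lorentzProfile μ P p fun x => f x * g x)
      ≤ setLpNorm volume (Ioi 0) p (fun t => 2 ^ (1 / P - 1 / p.toReal) * (F * G) t) :=
        setLpNorm_mono measurableSet_Ioi fun t ht => lorentzProfile_mul_le hPQR hreal f g ht
    _ = 2 ^ (1 / P - 1 / p.toReal) * setLpNorm volume (Ioi 0) p (F * G) :=
        setLpNorm_const_mul (ENNReal.ne_zero_of_inv_eq_add hpqr hr hq) _ (hF.mul hG).aemeasurable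
    _ ≤ 2 ^ (1 / P - 1 / p.toReal) *
          (setLpNorm volume (Ioi 0) r F * setLpNorm volume (Ioi 0) q G) := by
        gcongr
        exact setLpNorm_mul_le measurableSet_Ioi hpqr hr hq hF.aemeasurable hG.aemeasurable
    _ = 2 ^ (1 / P) * setLpNorm volume (Ioi 0) r (lorentzProfile μ R r f) *
          setLpNorm volume (Ioi 0) q (lorentzProfile μ Q q g) := by
        rw [setLpNorm_Ioi_comp_div _ _ two_pos, setLpNorm_Ioi_comp_div _ _ two_pos,
          ENNReal.ofReal_ofNat, hconst]
        ring

end Lorentz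

theorem stmt5_general (n : ℕ) (P Q R : ℝ) (p q r : ENNReal)
    (hq : 1 ≤ q) (hr : 1 ≤ r)
    (hPQR : 1 / P = 1 / R + 1 / Q) (hpqr : p⁻¹ = r⁻¹ + q⁻¹) :
    ∃ Cc : ENNReal, Cc ≠ ⊤ ∧ ∀ f g : (Fin n → ℝ) → ℝ,
      lorentzNorm volume P p (fun x => f x * g x) ≤
        Cc * lorentzNorm volume R r f * lorentzNorm volume Q q g :=
  ⟨2 ^ (1 / P), by finiteness, lorentzNorm_mul_le hPQR hpqr (zero_lt_one.trans_le hr).ne'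
    (zero_lt_one.trans_le hq).ne'⟩

/-- Hölder inequality for Lorentz quasinorms: if `1/P = 1/R + 1/Q` and
`1/p = 1/r + 1/q`, then `‖fg‖_{P,p} ≤ C ‖f‖_{R,r} ‖g‖_{Q,q}` with a constant
depending only on the exponents. -/
theorem stmt5 (n : ℕ) (P Q R : ℝ) (p q r : ENNReal)
    (hP : 1 ≤ P) (hQ : 1 ≤ Q) (hR : 1 ≤ R)
    (hp : 1 ≤ p) (hq : 1 ≤ q) (hr : 1 ≤ r)
    (hPQR : 1 / P = 1 / R + 1 / Q) (hpqr : p⁻¹ = r⁻¹ + q⁻¹) :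
    ∃ Cc : ENNReal, Cc ≠ ⊤ ∧ ∀ f g : (Fin n → ℝ) → ℝ,
      lorentzNorm volume P p (fun x => f x * g x) ≤
        Cc * lorentzNorm volume R r f * lorentzNorm volume Q q g :=
  stmt5_general n P Q R p q r hq hr hPQR hpqr
end
end

section
/- Riesz–Herz equivalence: there exist constants c, C > 0 depending only on n such that for every locally integrable function u on ℝⁿ and all t > 0, c·u**(t) ≤ (Mu)*(t) ≤ C·u**(t), where u**(t) = (1/t)∫₀ᵗ u*(s) ds, u* is the decreasing rearrangement, and M is the uncentered maximal operator over cubes. -/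
open MeasureTheory Set Filter

noncomputable section

/-- The uncentered maximal operator over cubes (= balls of the sup-norm on `Fin n → ℝ`). -/
noncomputable def maxOp {n : ℕ} (u : (Fin n → ℝ) → ℝ) (x : Fin n → ℝ) : ENNReal :=
  ⨆ (c : Fin n → ℝ) (r : ℝ) (_ : 0 < r) (_ : x ∈ Metric.ball c r),
    (MeasureTheory.volume (Metric.ball c r))⁻¹ *
      ∫⁻ y in Metric.ball c r, ENNReal.ofReal |u y|

/-!
Write `λ₀ = u*(t)`. For the upper bound split `|u| ≤ λ₀ + (|u| - λ₀)₊`: by equimeasurability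
the excess has mass `∫₀ᵗ (u* - λ₀) ≤ t u**(t)`, so the weak type `(1,1)` bound for `M`
(a Besicovitch covering argument) puts `{Mu > λ₀ + C u**(t)}` inside a set of measure `≤ t`.

For the lower bound let `λ = (Mu)*(t)`. Since `|u| ≤ Mu` a.e., `λ₀ ≤ λ`, and
`∫₀ᵗ u* = t λ₀ + ∫ (|u| - λ₀)₊ ≤ t λ + λ |{|u| > λ₀}| + ∫_{|u| > λ} |u|`.
The last term is at most `C λ |{Mu > λ}| ≤ C λ t` (reverse weak type): around each Lebesgue
point with `|u| > λ` choose a ball whose average exceeds `λ` while that of the doubled ball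
does not, and cover by Besicovitch.
-/

open scoped ENNReal Topology
open Metric TopologicalSpace

namespace RieszHerz

theorem volume_Ioi_inter_setOf_ofReal_lt (a : ℝ≥0∞) :
    volume (Ioi 0 ∩ {b : ℝ | ENNReal.ofReal b < a}) = a := by
  rcases eq_or_ne a ∞ with rfl | ha
  · simp
  · have : Ioi 0 ∩ {b : ℝ | ENNReal.ofReal b < a} = Ioo 0 a.toReal := by
      ext b
      simp only [mem_inter_iff, mem_Ioi, mem_ofPred_eq, mem_Ioo, and_congr_right_iff]
      exact fun hb => ENNReal.ofReal_lt_iff_lt_toReal hb.le ha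
    rw [this, Real.volume_Ioo, sub_zero, ENNReal.ofReal_toReal ha]

section Rearrangement

variable {α : Type*} [MeasurableSpace α] (μ : Measure α) (g : α → ℝ≥0∞)

theorem rearrE_antitone : Antitone (rearrE μ g) :=
  fun _ _ hst => sInf_le_sInf fun _ ha => ha.trans (ENNReal.ofReal_le_ofReal hst)

theorem measure_rearrE_lt_le (t : ℝ) : μ {x | rearrE μ g t < g x} ≤ ENNReal.ofReal t := by
  have hne : {s : ℝ≥0∞ | μ {x | s < g x} ≤ ENNReal.ofReal t}.Nonempty := ⟨∞, by simp⟩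
  obtain ⟨s, s_anti, s_lim, s_mem⟩ := exists_seq_tendsto_sInf hne (OrderBot.bddBelow _)
  have hsub : {x | rearrE μ g t < g x} ⊆ ⋃ k, {x | s k < g x} := fun x hx =>
    mem_iUnion.2 ((tendsto_order.1 s_lim).2 _ hx).exists
  have hmono : Monotone fun k => {x | s k < g x} := fun _ _ hkl _ hx => (s_anti hkl).trans_lt hx
  exact (measure_mono hsub).trans ((hmono.measure_iUnion).trans_le (iSup_le s_mem))

theorem rearrE_le_iff {t : ℝ} {s : ℝ≥0∞} :
    rearrE μ g t ≤ s ↔ μ {x | s < g x} ≤ ENNReal.ofReal t :=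
  ⟨fun h => (measure_mono fun _ hx => h.trans_lt hx).trans (measure_rearrE_lt_le μ g t),
    fun h => sInf_le h⟩

theorem volume_Ioi_inter_setOf_lt_rearrE (s : ℝ≥0∞) :
    volume (Ioi 0 ∩ {t : ℝ | s < rearrE μ g t}) = μ {x | s < g x} := by
  have : Ioi 0 ∩ {t : ℝ | s < rearrE μ g t}
      = Ioi 0 ∩ {t | ENNReal.ofReal t < μ {x | s < g x}} := by
    ext t
    simp only [mem_inter_iff, mem_ofPred_eq, ← not_le, rearrE_le_iff]
  rw [this, volume_Ioi_inter_setOf_ofReal_lt]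

theorem lintegral_eq_lintegral_meas_ofReal_lt [SFinite μ] {h : α → ℝ≥0∞} (hh : Measurable h) :
    ∫⁻ x, h x ∂μ = ∫⁻ b in Ioi 0, μ {x | ENNReal.ofReal b < h x} := by
  have hS : MeasurableSet {p : α × ℝ | ENNReal.ofReal p.2 < h p.1} :=
    measurableSet_lt (by fun_prop) (by fun_prop)
  calc ∫⁻ x, h x ∂μ = μ.prod (volume.restrict (Ioi 0)) {p | ENNReal.ofReal p.2 < h p.1} := by
        rw [Measure.prod_apply hS]
        refine lintegral_congr fun x => ?_
        rw [Measure.restrict_apply' measurableSet_Ioi, inter_comm]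
        exact (volume_Ioi_inter_setOf_ofReal_lt (h x)).symm
    _ = _ := Measure.prod_apply_symm hS

variable {μ g}

theorem rearrE_congr_ae {g₁ g₂ : α → ℝ≥0∞} (h : g₁ =ᵐ[μ] g₂) :
    rearrE μ g₁ = rearrE μ g₂ := by
  have : ∀ s : ℝ≥0∞, μ {x | s < g₁ x} = μ {x | s < g₂ x} := fun s =>
    measure_congr (h.mono fun _ hx => congrArg (s < ·) hx)
  ext t
  simp only [rearrE, this]

theorem lintegral_tsub_rearrE [SFinite μ] (hg : Measurable g) {t : ℝ}
    (ht : rearrE μ g t ≠ ∞) :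
    ∫⁻ x, g x - rearrE μ g t ∂μ = ∫⁻ s in Ioc 0 t, rearrE μ g s - rearrE μ g t := by
  set a := rearrE μ g t
  have hmeas : Measurable fun s => rearrE μ g s - a :=
    (rearrE_antitone μ g).measurable.sub measurable_const
  rw [lintegral_eq_lintegral_meas_ofReal_lt μ (h := fun x => g x - a)
      (hg.sub measurable_const),
    lintegral_eq_lintegral_meas_ofReal_lt _ hmeas]
  refine setLIntegral_congr_fun measurableSet_Ioi fun b hb => ?_
  have hcancel : AddLECancellable a := ENNReal.cancel_of_ne ht
  have hlevel : {s | ENNReal.ofReal b < rearrE μ g s - a} ∩ Ioc 0 t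
      = Ioi 0 ∩ {s | a + ENNReal.ofReal b < rearrE μ g s} := by
    ext s
    simp only [mem_inter_iff, mem_ofPred_eq, mem_Ioc, mem_Ioi, hcancel.lt_tsub_iff_left]
    refine ⟨fun ⟨h, hs, _⟩ => ⟨hs, h⟩, fun ⟨hs, h⟩ => ⟨h, hs, not_lt.1 fun hts => ?_⟩⟩
    exact (rearrE_antitone μ g hts.le).not_gt
      ((ENNReal.lt_add_right ht (ENNReal.ofReal_pos.2 hb).ne').trans h)
  rw [Measure.restrict_apply (measurableSet_lt measurable_const hmeas), hlevel,
    volume_Ioi_inter_setOf_lt_rearrE]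
  simp only [hcancel.lt_tsub_iff_left]

theorem lintegral_tsub_le (hg : Measurable g) (a b : ℝ≥0∞) :
    ∫⁻ x, g x - a ∂μ ≤ b * μ {x | a < g x} + ∫⁻ x in {x | b < g x}, g x ∂μ := by
  have hA : MeasurableSet {x | a < g x} := measurableSet_lt measurable_const hg
  have hB : MeasurableSet {x | b < g x} := measurableSet_lt measurable_const hg
  have hpt : ∀ x,
      g x - a ≤ {x | a < g x}.indicator (fun _ => b) x + {x | b < g x}.indicator g x := by
    intro x
    by_cases hxa : a < g x
    · rw [indicator_of_mem (s := {x | a < g x}) hxa]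
      by_cases hxb : b < g x
      · rw [indicator_of_mem (s := {x | b < g x}) hxb]
        exact le_add_left tsub_le_self
      · rw [indicator_of_notMem (s := {x | b < g x}) hxb, add_zero]
        exact tsub_le_self.trans (not_lt.1 hxb)
    · rw [tsub_eq_zero_of_le (not_lt.1 hxa)]
      exact bot_le
  calc ∫⁻ x, g x - a ∂μ
      ≤ ∫⁻ x, {x | a < g x}.indicator (fun _ => b) x + {x | b < g x}.indicator g x ∂μ :=
        lintegral_mono hpt
    _ = b * μ {x | a < g x} + ∫⁻ x in {x | b < g x}, g x ∂μ := by
        rw [lintegral_add_left (measurable_const.indicator hA), lintegral_indicator_const hA,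
          lintegral_indicator hB]

end Rearrangement

section Besicovitch

variable {α : Type*} [MetricSpace α] [SeparableSpace α] [MeasurableSpace α]
  [OpensMeasurableSpace α]

theorem measure_le_of_forall_closedBall_le {N : ℕ} {τ : ℝ} (hτ : 1 < τ)
    (hN : IsEmpty (Besicovitch.SatelliteConfig α N τ)) {ν₁ ν₂ : Measure α} {K : ℝ≥0∞}
    {A E : Set α} {r : α → ℝ} {R : ℝ} (hr : ∀ x ∈ A, 0 < r x ∧ r x ≤ R)
    (hE : ∀ x ∈ A, closedBall x (r x) ⊆ E)
    (hK : ∀ x ∈ A, ν₁ (closedBall x (r x)) ≤ K * ν₂ (closedBall x (r x))) :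
    ν₁ A ≤ N * K * ν₂ E := by
  let q : Besicovitch.BallPackage A α :=
    { c := Subtype.val, r := fun x => r x, rpos := fun x => (hr x x.2).1,
      r_bound := R, r_le := fun x => (hr x x.2).2 }
  obtain ⟨s, hs_disj, hs_cover⟩ := Besicovitch.exist_disjoint_covering_families hτ hN q
  have hcover : A ⊆ ⋃ j, ⋃ i ∈ s j, closedBall i.1 (r i) := fun x hx => by
    have := hs_cover ⟨⟨x, hx⟩, rfl⟩
    simp only [mem_iUnion] at this ⊢
    obtain ⟨j, i, hi, hxi⟩ := this
    exact ⟨j, i, hi, ball_subset_closedBall hxi⟩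
  have hfamily : ∀ j, ν₁ (⋃ i ∈ s j, closedBall i.1 (r i)) ≤ K * ν₂ E := by
    intro j
    have hcount : (s j).Countable := (hs_disj j).countable_of_nonempty_interior fun i _ =>
      ⟨i.1, mem_interior_iff_mem_nhds.2 (closedBall_mem_nhds _ (hr i i.2).1)⟩
    calc ν₁ (⋃ i ∈ s j, closedBall i.1 (r i))
        ≤ ∑' i : s j, ν₁ (closedBall i.1.1 (r i)) := measure_biUnion_le ν₁ hcount _
      _ ≤ ∑' i : s j, K * ν₂ (closedBall i.1.1 (r i)) :=
        ENNReal.tsum_le_tsum fun i => hK i.1 i.1.2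
      _ = K * ν₂ (⋃ i ∈ s j, closedBall i.1 (r i)) := by
        rw [ENNReal.tsum_mul_left,
          measure_biUnion hcount (hs_disj j) fun _ _ => measurableSet_closedBall]
      _ ≤ K * ν₂ E := by
        gcongr
        exact iUnion₂_subset fun i _ => hE i i.2
  calc ν₁ A ≤ ∑ j, ν₁ (⋃ i ∈ s j, closedBall i.1 (r i)) :=
        (measure_mono hcover).trans (measure_iUnion_fintype_le ν₁ _)
    _ ≤ ∑ _j : Fin N, K * ν₂ E := Finset.sum_le_sum fun j _ => hfamily j
    _ = N * K * ν₂ E := by simp [mul_assoc]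

end Besicovitch

section MaximalFunction

variable {n : ℕ} {g : (Fin n → ℝ) → ℝ≥0∞}

def maximalFunction (g : (Fin n → ℝ) → ℝ≥0∞) (x : Fin n → ℝ) : ℝ≥0∞ :=
  ⨆ (c : Fin n → ℝ) (r : ℝ) (_ : 0 < r) (_ : x ∈ ball c r),
    (volume (ball c r))⁻¹ * ∫⁻ y in ball c r, g y

theorem maxOp_eq_maximalFunction (u : (Fin n → ℝ) → ℝ) :
    maxOp u = maximalFunction fun x => ENNReal.ofReal |u x| :=
  rfl

theorem maximalFunction_congr_ae {g₁ g₂ : (Fin n → ℝ) → ℝ≥0∞} (h : g₁ =ᵐ[volume] g₂) :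
    maximalFunction g₁ = maximalFunction g₂ := by
  ext x
  simp only [maximalFunction, lintegral_congr_ae (ae_restrict_of_ae h)]

theorem volume_ball_eq (c : Fin n → ℝ) {r : ℝ} (hr : 0 < r) :
    volume (ball c r) = ENNReal.ofReal ((2 * r) ^ n) := by
  simpa using Real.volume_pi_ball c hr

theorem volume_closedBall_eq (c : Fin n → ℝ) {r : ℝ} (hr : 0 ≤ r) :
    volume (closedBall c r) = ENNReal.ofReal ((2 * r) ^ n) := by
  simpa using Real.volume_pi_closedBall c hr

theorem volume_closedBall_two_mul (c : Fin n → ℝ) {r : ℝ} (hr : 0 ≤ r) :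
    volume (closedBall c (2 * r)) = 2 ^ n * volume (closedBall c r) := by
  rw [volume_closedBall_eq c hr, volume_closedBall_eq c (by positivity), mul_pow 2 (2 * r),
    ENNReal.ofReal_mul (by positivity), ENNReal.ofReal_pow zero_le_two, ENNReal.ofReal_ofNat]

theorem le_max_one_of_volume_closedBall_le (hn : 1 ≤ n) {c : Fin n → ℝ} {r T : ℝ} (hr : 0 < r)
    (h : volume (closedBall c r) ≤ ENNReal.ofReal T) : r ≤ max 1 T := by
  rw [volume_closedBall_eq c hr.le] at h
  have hT : (2 * r) ^ n ≤ T := (ENNReal.ofReal_le_ofReal_iff'.1 h).resolve_right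
    (by intro hT; linarith [pow_pos (by positivity : 0 < 2 * r) n, hT])
  rcases le_or_gt (2 * r) 1 with h1 | h1
  · exact le_max_of_le_left (by linarith)
  · exact le_max_of_le_right (by linarith [le_self_pow₀ h1.le (by omega : n ≠ 0)])

theorem lt_inv_volume_ball_mul_iff {c : Fin n → ℝ} {r : ℝ} (hr : 0 < r) {s T : ℝ≥0∞} :
    s < (volume (ball c r))⁻¹ * T ↔ s * volume (ball c r) < T := by
  rw [← ENNReal.div_eq_inv_mul, ENNReal.lt_div_iff_mul_lt]
  · rw [volume_ball_eq c hr]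
    exact Or.inl (ENNReal.ofReal_pos.2 (by positivity)).ne'
  · exact Or.inl measure_ball_lt_top.ne

theorem inv_volume_ball_mul_le_maximalFunction {c x : Fin n → ℝ} {r : ℝ} (hr : 0 < r)
    (hx : x ∈ ball c r) :
    (volume (ball c r))⁻¹ * ∫⁻ y in ball c r, g y ≤ maximalFunction g x :=
  le_iSup₂_of_le c r (le_iSup₂_of_le (ι := 0 < r) (κ := fun _ => x ∈ ball c r) hr hx le_rfl)

theorem exists_ball_of_lt_maximalFunction {s : ℝ≥0∞} {x : Fin n → ℝ}
    (h : s < maximalFunction g x) :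
    ∃ c r, 0 < r ∧ x ∈ ball c r ∧ s * volume (ball c r) < ∫⁻ y in ball c r, g y := by
  simp only [maximalFunction, lt_iSup_iff] at h
  obtain ⟨c, r, hr, hx, hlt⟩ := h
  exact ⟨c, r, hr, hx, (lt_inv_volume_ball_mul_iff hr).1 hlt⟩

theorem maximalFunction_le_add {b : (Fin n → ℝ) → ℝ≥0∞} {a : ℝ≥0∞} (h : ∀ x, g x ≤ a + b x)
    (x : Fin n → ℝ) : maximalFunction g x ≤ a + maximalFunction b x := by
  refine iSup₂_le fun c r => iSup₂_le fun hr hx => ?_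
  have hv : volume (ball c r) ≠ 0 := (measure_ball_pos volume c hr).ne'
  calc (volume (ball c r))⁻¹ * ∫⁻ y in ball c r, g y
      ≤ (volume (ball c r))⁻¹ * ∫⁻ y in ball c r, a + b y := by gcongr with y; exact h y
    _ = a + (volume (ball c r))⁻¹ * ∫⁻ y in ball c r, b y := by
        rw [lintegral_add_left measurable_const, setLIntegral_const, mul_add, mul_comm a,
          ← mul_assoc, ENNReal.inv_mul_cancel hv measure_ball_lt_top.ne, one_mul]
    _ ≤ a + maximalFunction b x := by grw [inv_volume_ball_mul_le_maximalFunction (g := b) hr hx]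

/-- Slightly larger open balls centred at `x` still have average above `s`. -/
theorem closedBall_subset_setOf_lt_maximalFunction {s : ℝ≥0∞} (hs : s ≠ ∞) {x : Fin n → ℝ}
    {r : ℝ} (hr : 0 < r) (h : s * volume (closedBall x r) < ∫⁻ y in closedBall x r, g y) :
    closedBall x r ⊆ {z | s < maximalFunction g z} := by
  rw [volume_closedBall_eq x hr.le] at h
  have hcont : Continuous fun ρ : ℝ => s * ENNReal.ofReal ((2 * ρ) ^ n) :=
    (ENNReal.continuous_const_mul hs).comp (ENNReal.continuous_ofReal.comp (by fun_prop))
  have hev : ∀ᶠ ρ in 𝓝[>] r, s * ENNReal.ofReal ((2 * ρ) ^ n) < ∫⁻ y in closedBall x r, g y :=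
    nhdsWithin_le_nhds ((hcont.tendsto r).eventually (gt_mem_nhds h))
  obtain ⟨ρ, hρ, hρr⟩ := (hev.and self_mem_nhdsWithin).exists
  intro z hz
  have hzρ : z ∈ ball x ρ := lt_of_le_of_lt (mem_closedBall.1 hz) hρr
  refine lt_of_lt_of_le ?_ (inv_volume_ball_mul_le_maximalFunction (hr.trans hρr) hzρ)
  rw [lt_inv_volume_ball_mul_iff (hr.trans hρr), volume_ball_eq x (hr.trans hρr)]
  exact hρ.trans_le (lintegral_mono_set (closedBall_subset_ball hρr))

theorem ae_exists_closedBall_mul_volume_lt (hg : Measurable g)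
    (hloc : ∀ R, ∫⁻ y in closedBall 0 R, g y ≠ ∞) :
    ∀ᵐ x, ∀ s < g x, ∃ r > 0, s * volume (closedBall x r) < ∫⁻ y in closedBall x r, g y := by
  have hdiff : ∀ k : ℕ, ∀ᵐ x, Tendsto
      (fun r => (∫⁻ y in closedBall x r, (closedBall 0 k).indicator g y) /
        volume (closedBall x r))
      (𝓝[>] 0) (𝓝 ((closedBall 0 k).indicator g x)) := fun k =>
    ((Besicovitch.vitaliFamily volume).ae_tendsto_lintegral_div
      (hg.indicator measurableSet_closedBall).aemeasurable
      (by rw [lintegral_indicator measurableSet_closedBall]; exact hloc k)).mono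
      fun x hx => hx.comp (Besicovitch.tendsto_filterAt volume x)
  filter_upwards [ae_all_iff.2 hdiff] with x hx s hs
  obtain ⟨k, hk⟩ := exists_nat_ge (dist x 0)
  have hlim := hx k
  rw [indicator_of_mem (mem_closedBall.2 hk)] at hlim
  obtain ⟨r, hlt, hr⟩ := ((hlim.eventually (lt_mem_nhds hs)).and self_mem_nhdsWithin).exists
  have hr : 0 < r := hr
  refine ⟨r, hr, ?_⟩
  rw [ENNReal.lt_div_iff_mul_lt (Or.inl (measure_closedBall_pos volume x hr).ne')
    (Or.inl measure_closedBall_lt_top.ne)] at hlt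
  exact hlt.trans_le (lintegral_mono (indicator_le_self _ g))

theorem ae_le_maximalFunction (hg : Measurable g)
    (hloc : ∀ R, ∫⁻ y in closedBall 0 R, g y ≠ ∞) : g ≤ᵐ[volume] maximalFunction g := by
  filter_upwards [ae_exists_closedBall_mul_volume_lt hg hloc] with x hx
  refine le_of_forall_lt fun s hs => ?_
  obtain ⟨r, hr, hlt⟩ := hx s hs
  exact closedBall_subset_setOf_lt_maximalFunction hs.ne_top hr hlt (mem_closedBall_self hr.le)

theorem volume_lt_maximalFunction_le (hn : 1 ≤ n) {N : ℕ} {τ : ℝ} (hτ : 1 < τ)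
    (hN : IsEmpty (Besicovitch.SatelliteConfig (Fin n → ℝ) N τ)) {β : ℝ≥0∞} (hβ : β ≠ 0)
    (hg : ∫⁻ y, g y ≠ ∞) :
    volume {x | β < maximalFunction g x} ≤ N * (2 ^ n * β⁻¹) * ∫⁻ y, g y := by
  set K : ℝ≥0∞ := 2 ^ n * β⁻¹
  have hball : ∀ x, ∃ r : ℝ, x ∈ {x | β < maximalFunction g x} → 0 < r ∧
      volume (closedBall x r) ≤ K * ∫⁻ y in closedBall x r, g y := by
    intro x
    by_cases hx : β < maximalFunction g x
    · obtain ⟨c, r, hr, hxc, hlt⟩ := exists_ball_of_lt_maximalFunction hx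
      have hsub : ball c r ⊆ closedBall x (2 * r) := fun y hy => mem_closedBall.2 <| by
        linarith [dist_triangle y c x, mem_ball.1 hy, mem_ball'.1 hxc]
      refine ⟨2 * r, fun _ => ⟨by positivity, ?_⟩⟩
      have hfin : ∫⁻ y in ball c r, g y ≠ ∞ :=
        ne_top_of_le_ne_top hg (setLIntegral_le_lintegral _ _)
      have hvol : volume (ball c r) ≤ β⁻¹ * ∫⁻ y in ball c r, g y := by
        rw [← ENNReal.div_eq_inv_mul, ENNReal.le_div_iff_mul_le (Or.inl hβ) (Or.inr hfin), mul_comm]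
        exact hlt.le
      calc volume (closedBall x (2 * r)) = 2 ^ n * volume (ball c r) := by
            rw [volume_closedBall_two_mul x hr.le, volume_closedBall_eq x hr.le,
              volume_ball_eq c hr]
        _ ≤ 2 ^ n * (β⁻¹ * ∫⁻ y in ball c r, g y) := by gcongr
        _ ≤ K * ∫⁻ y in closedBall x (2 * r), g y := by
            rw [← mul_assoc]
            gcongr
    · exact ⟨1, fun h => absurd h hx⟩
  choose r hr using hball
  have hbound : ∀ x ∈ {x | β < maximalFunction g x},
      0 < r x ∧ r x ≤ max 1 (K * ∫⁻ y, g y).toReal :=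
    fun x hx => ⟨(hr x hx).1, le_max_one_of_volume_closedBall_le hn (hr x hx).1 <| by
      rw [ENNReal.ofReal_toReal (ENNReal.mul_ne_top (ENNReal.mul_ne_top (by simp)
        (ENNReal.inv_ne_top.2 hβ)) hg)]
      exact (hr x hx).2.trans (mul_le_mul' le_rfl (setLIntegral_le_lintegral _ _))⟩
  have := measure_le_of_forall_closedBall_le hτ hN (ν₁ := volume) (ν₂ := volume.withDensity g)
    hbound (fun x _ => subset_univ _) fun x hx => by
      rw [withDensity_apply g measurableSet_closedBall]
      exact (hr x hx).2
  rwa [withDensity_apply _ MeasurableSet.univ, Measure.restrict_univ] at this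

theorem exists_mem_two_mul_notMem {S : Set ℝ} (hne : S.Nonempty) (hpos : ∀ r ∈ S, 0 < r)
    (hbdd : BddAbove S) : ∃ r ∈ S, 2 * r ∉ S := by
  obtain ⟨r₀, hr₀⟩ := hne
  have hsup : 0 < sSup S := (hpos r₀ hr₀).trans_le (le_csSup hbdd hr₀)
  obtain ⟨r, hrS, hr⟩ := exists_lt_of_lt_csSup ⟨r₀, hr₀⟩ (half_lt_self hsup)
  exact ⟨r, hrS, fun h => by linarith [le_csSup hbdd h]⟩

/-- Choose `r` so that the average of `g` exceeds `s` on `closedBall x r` but not on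
`closedBall x (2 * r)`. -/
theorem exists_closedBall_setLIntegral_le (hn : 1 ≤ n) {s : ℝ≥0∞} (hs : s ≠ ∞) {x : Fin n → ℝ}
    {T : ℝ} (hT : volume {z | s < maximalFunction g z} ≤ ENNReal.ofReal T)
    (hx : ∃ r > 0, s * volume (closedBall x r) < ∫⁻ y in closedBall x r, g y) :
    ∃ r, (0 < r ∧ r ≤ max 1 T) ∧ closedBall x r ⊆ {z | s < maximalFunction g z} ∧
      ∫⁻ y in closedBall x r, g y ≤ 2 ^ n * s * volume (closedBall x r) := by
  set S := {r : ℝ | 0 < r ∧ s * volume (closedBall x r) < ∫⁻ y in closedBall x r, g y}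
  have hsub : ∀ r ∈ S, closedBall x r ⊆ {z | s < maximalFunction g z} := fun r hr =>
    closedBall_subset_setOf_lt_maximalFunction hs hr.1 hr.2
  have hbound : ∀ r ∈ S, r ≤ max 1 T := fun r hr =>
    le_max_one_of_volume_closedBall_le hn hr.1 ((measure_mono (hsub r hr)).trans hT)
  obtain ⟨r, hrS, h2r⟩ := exists_mem_two_mul_notMem
    (by obtain ⟨r, hr, h⟩ := hx; exact ⟨r, hr, h⟩) (fun r hr => hr.1) ⟨_, hbound⟩
  refine ⟨r, ⟨hrS.1, hbound r hrS⟩, hsub r hrS, ?_⟩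
  calc ∫⁻ y in closedBall x r, g y ≤ ∫⁻ y in closedBall x (2 * r), g y :=
        lintegral_mono_set (closedBall_subset_closedBall (by linarith [hrS.1]))
    _ ≤ s * volume (closedBall x (2 * r)) := not_lt.1 fun h => h2r ⟨by linarith [hrS.1], h⟩
    _ = 2 ^ n * s * volume (closedBall x r) := by
        rw [volume_closedBall_two_mul x hrS.1.le]
        ring

theorem setLIntegral_lt_le (hn : 1 ≤ n) {N : ℕ} {τ : ℝ} (hτ : 1 < τ)
    (hN : IsEmpty (Besicovitch.SatelliteConfig (Fin n → ℝ) N τ)) (hg : Measurable g)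
    (hloc : ∀ R, ∫⁻ y in closedBall 0 R, g y ≠ ∞) {s : ℝ≥0∞} (hs : s ≠ ∞) {T : ℝ}
    (hT : volume {z | s < maximalFunction g z} ≤ ENNReal.ofReal T) :
    ∫⁻ x in {x | s < g x}, g x ≤ N * (2 ^ n * s) * volume {z | s < maximalFunction g z} := by
  set A := {x | s < g x ∧ ∃ r > 0, s * volume (closedBall x r) < ∫⁻ y in closedBall x r, g y}
  have hrad : ∀ x, ∃ r : ℝ, x ∈ A → (0 < r ∧ r ≤ max 1 T) ∧
      closedBall x r ⊆ {z | s < maximalFunction g z} ∧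
      ∫⁻ y in closedBall x r, g y ≤ 2 ^ n * s * volume (closedBall x r) := fun x => by
    by_cases hx : x ∈ A
    · obtain ⟨r, hr⟩ := exists_closedBall_setLIntegral_le hn hs hT hx.2
      exact ⟨r, fun _ => hr⟩
    · exact ⟨0, fun h => absurd h hx⟩
  choose r hr using hrad
  have hA : {x | s < g x} ≤ᵐ[volume.withDensity g] A :=
    (withDensity_absolutelyContinuous volume g).ae_le <| by
      filter_upwards [ae_exists_closedBall_mul_volume_lt hg hloc] with x hx hxs
      exact ⟨hxs, hx s hxs⟩
  calc ∫⁻ x in {x | s < g x}, g x = volume.withDensity g {x | s < g x} :=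
        (withDensity_apply _ (measurableSet_lt measurable_const hg)).symm
    _ ≤ volume.withDensity g A := measure_mono_ae hA
    _ ≤ _ := measure_le_of_forall_closedBall_le hτ hN (fun x hx => (hr x hx).1)
        (fun x hx => (hr x hx).2.1) fun x hx => by
          rw [withDensity_apply _ measurableSet_closedBall]
          exact (hr x hx).2.2

theorem inv_mul_lintegral_rearrE_le (hn : 1 ≤ n) {N : ℕ} {τ : ℝ} (hτ : 1 < τ)
    (hN : IsEmpty (Besicovitch.SatelliteConfig (Fin n → ℝ) N τ)) (hg : Measurable g)
    (hloc : ∀ R, ∫⁻ y in closedBall 0 R, g y ≠ ∞) {t : ℝ} (ht : 0 < t) :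
    (ENNReal.ofReal t)⁻¹ * ∫⁻ s in Ioc 0 t, rearrE volume g s
      ≤ (2 + N * 2 ^ n) * rearrE volume (maximalFunction g) t := by
  set lam := rearrE volume (maximalFunction g) t
  set lam₀ := rearrE volume g t
  have hE : volume {x | lam < maximalFunction g x} ≤ ENNReal.ofReal t :=
    measure_rearrE_lt_le _ _ t
  rcases eq_or_ne lam ∞ with hlam | hlam
  · rw [hlam, ENNReal.mul_top (by positivity)]
    exact le_top
  have hlam₀ : lam₀ ≤ lam := (rearrE_le_iff _ _).2 <| (measure_mono_ae <|
    (ae_le_maximalFunction hg hloc).mono fun x hx (h : lam < g x) => h.trans_le hx).trans hE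
  have hrearr : ∀ s ∈ Ioc 0 t, lam₀ ≤ rearrE volume g s := fun s hs => rearrE_antitone _ _ hs.2
  rw [ENNReal.inv_mul_le_iff (ENNReal.ofReal_pos.2 ht).ne' ENNReal.ofReal_ne_top]
  calc ∫⁻ s in Ioc 0 t, rearrE volume g s
      = ∫⁻ s in Ioc 0 t, lam₀ + (rearrE volume g s - lam₀) :=
        setLIntegral_congr_fun measurableSet_Ioc fun s hs =>
          (add_tsub_cancel_of_le (hrearr s hs)).symm
    _ = lam₀ * ENNReal.ofReal t + ∫⁻ x, g x - lam₀ := by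
        rw [lintegral_add_left measurable_const, setLIntegral_const, Real.volume_Ioc, sub_zero,
          lintegral_tsub_rearrE hg (ne_top_of_le_ne_top hlam hlam₀)]
    _ ≤ lam * ENNReal.ofReal t
          + (lam * volume {x | lam₀ < g x} + ∫⁻ x in {x | lam < g x}, g x) := by
        gcongr
        exact lintegral_tsub_le hg _ _
    _ ≤ lam * ENNReal.ofReal t
          + (lam * ENNReal.ofReal t + N * (2 ^ n * lam) * ENNReal.ofReal t) := by
        gcongr
        · exact measure_rearrE_lt_le _ _ t
        · exact (setLIntegral_lt_le hn hτ hN hg hloc hlam hE).trans (by gcongr)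
    _ = ENNReal.ofReal t * ((2 + N * 2 ^ n) * lam) := by ring

theorem rearrE_maximalFunction_le_add (hn : 1 ≤ n) {N : ℕ} {τ : ℝ} (hτ : 1 < τ)
    (hN : IsEmpty (Besicovitch.SatelliteConfig (Fin n → ℝ) N τ)) {t : ℝ} {β : ℝ≥0∞}
    (hβ : β ≠ 0) (ht : rearrE volume g t ≠ ∞) (hfin : ∫⁻ x, g x - rearrE volume g t ≠ ∞)
    (h : N * 2 ^ n * ∫⁻ x, g x - rearrE volume g t ≤ β * ENNReal.ofReal t) :
    rearrE volume (maximalFunction g) t ≤ rearrE volume g t + β := by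
  set lam₀ := rearrE volume g t
  refine (rearrE_le_iff _ _).2 <| (measure_mono fun x hx => (ENNReal.add_lt_add_iff_left ht).1 <|
    hx.trans_le (maximalFunction_le_add (fun x => le_add_tsub) x)).trans ?_
  calc volume {x | β < maximalFunction (fun x => g x - lam₀) x}
      ≤ N * (2 ^ n * β⁻¹) * ∫⁻ x, g x - lam₀ := volume_lt_maximalFunction_le hn hτ hN hβ hfin
    _ = β⁻¹ * (N * 2 ^ n * ∫⁻ x, g x - lam₀) := by ring
    _ ≤ β⁻¹ * β * ENNReal.ofReal t := by grw [h, mul_assoc]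
    _ ≤ ENNReal.ofReal t := by grw [ENNReal.inv_mul_le_one, one_mul]

theorem rearrE_maximalFunction_le (hn : 1 ≤ n) {N : ℕ} {τ : ℝ} (hτ : 1 < τ)
    (hN : IsEmpty (Besicovitch.SatelliteConfig (Fin n → ℝ) N τ)) (hg : Measurable g) {t : ℝ}
    (ht : 0 < t) :
    rearrE volume (maximalFunction g) t
      ≤ (1 + N * 2 ^ n) * ((ENNReal.ofReal t)⁻¹ * ∫⁻ s in Ioc 0 t, rearrE volume g s) := by
  set I := ∫⁻ s in Ioc 0 t, rearrE volume g s
  set J := (ENNReal.ofReal t)⁻¹ * I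
  set lam₀ := rearrE volume g t
  set K : ℝ≥0∞ := N * 2 ^ n
  have ht₀ : ENNReal.ofReal t ≠ 0 := (ENNReal.ofReal_pos.2 ht).ne'
  have hJI : J * ENNReal.ofReal t = I := by
    rw [mul_comm, ← mul_assoc, ENNReal.mul_inv_cancel ht₀ ENNReal.ofReal_ne_top, one_mul]
  have hlam₀ : lam₀ ≤ J := by
    rw [show J = I / ENNReal.ofReal t from ENNReal.div_eq_inv_mul.symm,
      ENNReal.le_div_iff_mul_le (Or.inl ht₀) (Or.inl ENNReal.ofReal_ne_top)]
    calc lam₀ * ENNReal.ofReal t = ∫⁻ _ in Ioc 0 t, lam₀ := by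
          rw [setLIntegral_const, Real.volume_Ioc, sub_zero]
      _ ≤ I := setLIntegral_mono' measurableSet_Ioc fun s hs => rearrE_antitone _ _ hs.2
  refine ENNReal.le_of_forall_pos_le_add fun ε hε hfin => ?_
  have hJ : J ≠ ∞ := by
    rintro h
    simp [h] at hfin
  have hlam₀_top : lam₀ ≠ ∞ := ne_top_of_le_ne_top hJ hlam₀
  have hexcess : ∫⁻ x, g x - lam₀ ≤ J * ENNReal.ofReal t := by
    rw [hJI, lintegral_tsub_rearrE hg hlam₀_top]
    exact lintegral_mono fun s => tsub_le_self
  calc rearrE volume (maximalFunction g) t ≤ lam₀ + (K * J + ε) := by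
        refine rearrE_maximalFunction_le_add hn hτ hN (by simp [hε.ne']) hlam₀_top
          (ne_top_of_le_ne_top (by finiteness) hexcess) ?_
        grw [hexcess, ← mul_assoc, ← le_self_add]
    _ ≤ J + (K * J + ε) := by gcongr
    _ = (1 + K) * J + ε := by ring

end MaximalFunction

end RieszHerz

open RieszHerz

/-- Riesz–Herz equivalence: `(Mu)*(t) ≈ u**(t)` with constants depending only on `n`. -/
theorem stmt18 (n : ℕ) (hn : 1 ≤ n) :
    ∃ c C : ℝ, 0 < c ∧ 0 < C ∧
      ∀ u : (Fin n → ℝ) → ℝ, LocallyIntegrable u volume →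
        ∀ t : ℝ, 0 < t →
          ENNReal.ofReal c *
              ((ENNReal.ofReal t)⁻¹ * ∫⁻ s in Set.Ioc (0:ℝ) t, rearr volume u s) ≤
            rearrE volume (maxOp u) t ∧
          rearrE volume (maxOp u) t ≤
            ENNReal.ofReal C *
              ((ENNReal.ofReal t)⁻¹ * ∫⁻ s in Set.Ioc (0:ℝ) t, rearr volume u s) := by
  obtain ⟨N, τ, hτ, hN⟩ := HasBesicovitchCovering.no_satelliteConfig (α := Fin n → ℝ)
  refine ⟨(2 + N * 2 ^ n)⁻¹, 1 + N * 2 ^ n, by positivity, by positivity, fun u hu t ht => ?_⟩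
  have hu' : AEMeasurable (fun x => ENNReal.ofReal |u x|) volume :=
    hu.aestronglyMeasurable.aemeasurable.abs.ennreal_ofReal
  have hloc : ∀ R, ∫⁻ y in closedBall 0 R, hu'.mk _ y ≠ ∞ := fun R => by
    rw [← lintegral_congr_ae (ae_restrict_of_ae hu'.ae_eq_mk)]
    simpa [Real.enorm_eq_ofReal_abs] using
      (hu.integrableOn_isCompact (isCompact_closedBall 0 R)).hasFiniteIntegral.ne
  simp only [rearr]
  rw [maxOp_eq_maximalFunction, maximalFunction_congr_ae hu'.ae_eq_mk,
    rearrE_congr_ae hu'.ae_eq_mk]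
  have hc : ENNReal.ofReal (2 + N * 2 ^ n) = 2 + N * 2 ^ n := by
    exact_mod_cast ENNReal.ofReal_natCast (2 + N * 2 ^ n)
  have hC : ENNReal.ofReal (1 + N * 2 ^ n) = 1 + N * 2 ^ n := by
    exact_mod_cast ENNReal.ofReal_natCast (1 + N * 2 ^ n)
  constructor
  · rw [ENNReal.ofReal_inv_of_pos (by positivity), hc,
      ENNReal.inv_mul_le_iff (by positivity) (by finiteness)]
    exact inv_mul_lintegral_rearrE_le hn hτ hN hu'.measurable_mk hloc ht
  · rw [hC]
    exact rearrE_maximalFunction_le hn hτ hN hu'.measurable_mk ht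
end
end

section
/- Failure of factorization without local embedding: let X, Y be Banach function spaces over ℝⁿ such that Y is NOT locally embedded into X. Then the functional ‖f‖_Z := sup{‖f·g‖_X : ‖g‖_Y ≤ 1} is not a Banach function norm; more precisely, there exists a measurable set E of finite measure with ‖χ_E‖_Z = ∞. -/
open MeasureTheory Set Filter

noncomputable section

/-- A (rearrangement-invariant) Banach function norm over `ℝⁿ` with Lebesgue measure. -/
structure BFNorm (n : ℕ) where
  /-- The norm functional. -/
  ρ : ((Fin n → ℝ) → ℝ) → ENNReal
  /-- Lattice (monotonicity) property. -/
  mono : ∀ f g : (Fin n → ℝ) → ℝ,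
    (∀ᵐ x ∂MeasureTheory.volume, |f x| ≤ |g x|) → ρ f ≤ ρ g
  /-- Homogeneity. -/
  smul : ∀ (c : ℝ) (f : (Fin n → ℝ) → ℝ),
    ρ (fun x => c * f x) = ENNReal.ofReal |c| * ρ f
  /-- Triangle inequality. -/
  add : ∀ f g : (Fin n → ℝ) → ℝ, ρ (fun x => f x + g x) ≤ ρ f + ρ g
  /-- Nondegeneracy. -/
  pos : ∀ f : (Fin n → ℝ) → ℝ, ρ f = 0 → ∀ᵐ x ∂MeasureTheory.volume, f x = 0
  /-- Characteristic functions of sets of finite measure have finite norm. -/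
  chiFin : ∀ E : Set (Fin n → ℝ), MeasurableSet E → MeasureTheory.volume E < ⊤ →
    ρ (E.indicator (fun _ => (1:ℝ))) < ⊤
  /-- Fatou property. -/
  fatou : ∀ (f : ℕ → (Fin n → ℝ) → ℝ) (g : (Fin n → ℝ) → ℝ),
    (∀ i, ∀ᵐ x ∂MeasureTheory.volume, 0 ≤ f i x ∧ f i x ≤ f (i+1) x) →
    (∀ᵐ x ∂MeasureTheory.volume, Filter.Tendsto (fun i => f i x) Filter.atTop (nhds (g x))) →
    ρ g = ⨆ i, ρ (f i)

/-- Rearrangement invariance: equimeasurable functions have equal norm. -/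
def BFNorm.RearrInv {n : ℕ} (X : BFNorm n) : Prop :=
  ∀ f g : (Fin n → ℝ) → ℝ,
    (∀ s : ℝ, 0 < s →
      MeasureTheory.volume {x | s < |f x|} = MeasureTheory.volume {x | s < |g x|}) →
    X.ρ f = X.ρ g

/-- `Y` is locally embedded into `X`. -/
def LocEmb {n : ℕ} (Y X : BFNorm n) : Prop :=
  ∀ E : Set (Fin n → ℝ), MeasurableSet E → MeasureTheory.volume E < ⊤ →
    ∃ C : ENNReal, C ≠ ⊤ ∧ ∀ u : (Fin n → ℝ) → ℝ,
      X.ρ (E.indicator u) ≤ C * Y.ρ (E.indicator u)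

/-- The multiplier norm `‖f‖_{Y^X} = sup{‖f·g‖_X : ‖g‖_Y ≤ 1}`. -/
noncomputable def multNorm {n : ℕ} (X Y : BFNorm n) (f : (Fin n → ℝ) → ℝ) : ENNReal :=
  ⨆ (g : (Fin n → ℝ) → ℝ) (_ : Y.ρ g ≤ 1), X.ρ (fun x => f x * g x)

/-!
Failure of local embedding on a set `E` of finite measure means that the ratio
`‖χ_E u‖_X / ‖χ_E u‖_Y` is unbounded. Rescaling `χ_E u` to the unit sphere of `Y` turns these
ratios into values `‖χ_E · g‖_X` with `‖g‖_Y = 1`, all of which are bounded by `‖χ_E‖_Z`.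
-/

namespace BFNorm

variable {n : ℕ}

lemma rho_zero (X : BFNorm n) : X.ρ (fun _ => 0) = 0 := by
  simpa using X.smul 0 (fun _ => 0)

lemma rho_eq_zero_of_rho_eq_zero (X Y : BFNorm n) {v : (Fin n → ℝ) → ℝ} (h : Y.ρ v = 0) :
    X.ρ v = 0 := by
  refine le_antisymm ?_ zero_le
  calc X.ρ v ≤ X.ρ (fun _ => 0) :=
        X.mono v _ (by filter_upwards [Y.pos v h] with x hx; simp [hx])
    _ = 0 := X.rho_zero

lemma rho_inv_toReal_mul (X : BFNorm n) (v : (Fin n → ℝ) → ℝ) {a : ENNReal} (h0 : a ≠ 0)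
    (htop : a ≠ ⊤) : X.ρ (fun x => a.toReal⁻¹ * v x) = a⁻¹ * X.ρ v := by
  rw [X.smul, abs_of_pos (inv_pos.mpr (ENNReal.toReal_pos h0 htop)),
    ENNReal.ofReal_inv_of_pos (ENNReal.toReal_pos h0 htop), ENNReal.ofReal_toReal htop]

lemma exists_rho_le_one_lt_rho_const_mul (X Y : BFNorm n) {v : (Fin n → ℝ) → ℝ} {C : ENNReal}
    (hC : C ≠ 0) (h : C * Y.ρ v < X.ρ v) :
    ∃ c : ℝ, Y.ρ (fun x => c * v x) ≤ 1 ∧ C < X.ρ (fun x => c * v x) := by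
  have h0 : Y.ρ v ≠ 0 := fun hY => by
    simp [hY, rho_eq_zero_of_rho_eq_zero X Y hY] at h
  have htop : Y.ρ v ≠ ⊤ := fun hY => by
    simp [hY, ENNReal.mul_top hC] at h
  refine ⟨(Y.ρ v).toReal⁻¹, ?_, ?_⟩
  · rw [Y.rho_inv_toReal_mul v h0 htop, ENNReal.inv_mul_cancel h0 htop]
  · rw [X.rho_inv_toReal_mul v h0 htop]
    calc C = (Y.ρ v)⁻¹ * (C * Y.ρ v) := by
          rw [mul_left_comm, ENNReal.inv_mul_cancel h0 htop, mul_one]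
      _ < (Y.ρ v)⁻¹ * X.ρ v := ENNReal.mul_lt_mul_right (ENNReal.inv_ne_zero.mpr htop)
          (ENNReal.inv_ne_top.mpr h0) h

end BFNorm

lemma rho_indicator_le_multNorm {n : ℕ} (X Y : BFNorm n) (E : Set (Fin n → ℝ))
    {g : (Fin n → ℝ) → ℝ} (hg : Y.ρ g ≤ 1) :
    X.ρ (E.indicator g) ≤ multNorm X Y (E.indicator (fun _ => (1:ℝ))) := by
  refine le_iSup₂_of_le g hg (le_of_eq (congrArg X.ρ ?_))
  ext x
  by_cases hx : x ∈ E <;> simp [hx]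

/-- Failure of the factorization without the local embedding: if `Y` is not locally
embedded into `X`, then the multiplier functional is infinite on some characteristic
function of a set of finite measure, hence is not a Banach function norm. -/
theorem stmt19 (n : ℕ) (X Y : BFNorm n) (hloc : ¬ LocEmb Y X) :
    ∃ E : Set (Fin n → ℝ), MeasurableSet E ∧ volume E < ⊤ ∧
      multNorm X Y (E.indicator (fun _ => (1:ℝ))) = ⊤ := by
  simp only [LocEmb, not_forall, not_exists, not_and, not_le] at hloc
  obtain ⟨E, hE, hEvol, hfail⟩ := hloc
  refine ⟨E, hE, hEvol, ENNReal.eq_top_of_forall_nnreal_le fun r => ?_⟩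
  obtain ⟨u, hu⟩ := hfail (r + 1) (by simp)
  obtain ⟨c, hYc, hXc⟩ :=
    BFNorm.exists_rho_le_one_lt_rho_const_mul X Y (by simp) hu
  have hsupp : (fun x => c * E.indicator u x) = E.indicator (fun x => c * E.indicator u x) := by
    ext x
    by_cases hx : x ∈ E <;> simp [hx]
  calc (r : ENNReal) ≤ r + 1 := le_self_add
    _ ≤ X.ρ (fun x => c * E.indicator u x) := hXc.le
    _ = X.ρ (E.indicator fun x => c * E.indicator u x) := congrArg X.ρ hsupp
    _ ≤ multNorm X Y (E.indicator fun _ => 1) := rho_indicator_le_multNorm X Y E hYc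
end
end
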